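/- Nesting of barriers under refinement of the time step: let j > 0, let u ∈ L^∞(ℝ₊,ℝ₊) ∩ L¹(ℝ₊,ℝ₊), let δ > 0 with jδ < F(0; u), and let δ' = δ/ℓ for a positive integer ℓ. Then for all k ∈ ℕ, S^{(δ,−)}_{kδ}(u) ≤ S^{(δ',−)}_{kδ}(u) ≤ S^{(δ',+)}_{kδ}(u) ≤ S^{(δ,+)}_{kδ}(u). -/

import Mathlib

open MeasureTheory Set Filter

noncomputable section

/-- An element of the space `𝓤`: an atom `u.1 ≥ 0` at the origin together with a
density `u.2` on `ℝ₊`, representing the measure `u.1 δ₀ + u.2 dr`. -/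
abbrev UEl := ℝ × (ℝ → ℝ)

/-- Membership in `𝓤`: nonnegative atom, nonnegative density which is in
`L¹(ℝ₊) ∩ L^∞(ℝ₊)`. -/
def memU (u : UEl) : Prop :=
  0 ≤ u.1 ∧ (∀ r, 0 ≤ u.2 r) ∧
    Integrable u.2 (volume.restrict (Set.Ioi (0:ℝ))) ∧
    ∃ M : ℝ, ∀ r, u.2 r ≤ M

/-- The tail function `F(r; u) = c_u 𝟙_{{0}}(r) + ∫_r^∞ ρ_u`. -/
def tailF (u : UEl) (r : ℝ) : ℝ :=
  (if r = 0 then u.1 else 0) + ∫ x in Set.Ioi r, u.2 x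

/-- Total variation distance `|u − v|₁ = |c_u − c_v| + ∫₀^∞ |ρ_u − ρ_v|`. -/
def dist1 (u v : UEl) : ℝ :=
  |u.1 - v.1| + ∫ r in Set.Ioi (0:ℝ), |u.2 r - v.2 r|

/-- Membership in `𝓤_δ`: in `𝓤` and the density has mass `> jδ`. -/
def memUdelta (j δ : ℝ) (u : UEl) : Prop :=
  memU u ∧ j * δ < ∫ r in Set.Ioi (0:ℝ), u.2 r

/-- `R_δ(u) = inf {r ≥ 0 : F(r; u) = jδ}`. -/
def Rdelta (j δ : ℝ) (u : UEl) : ℝ :=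
  sInf {r : ℝ | 0 ≤ r ∧ tailF u r = j * δ}

/-- The cut-and-paste operator `K^{(δ)} u = (jδ, ρ_u 𝟙_{[0, R_δ(u)]})`. -/
def cutPaste (j δ : ℝ) (u : UEl) : UEl :=
  (j * δ, Set.indicator (Set.Icc 0 (Rdelta j δ u)) u.2)

/-- The Neumann heat kernel on `ℝ₊`. -/
def Gneum (t r r' : ℝ) : ℝ :=
  (Real.sqrt (2 * Real.pi * t))⁻¹ *
    (Real.exp (-(r - r')^2 / (2*t)) + Real.exp (-(r + r')^2 / (2*t)))

/-- The Neumann heat semigroup acting on `𝓤`: the result has zero atom and density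
`r ↦ c_u G_t(r,0) + ∫₀^∞ G_t(r,r') ρ_u(r') dr'`. -/
def heat (t : ℝ) (u : UEl) : UEl :=
  (0, fun r => u.1 * Gneum t r 0 + ∫ r' in Set.Ioi (0:ℝ), Gneum t r r' * u.2 r')

/-- Mass-transport partial order: `u ≤ v` iff `F(r;u) ≤ F(r;v)` for all `r ≥ 0`. -/
def Ule (u v : UEl) : Prop := ∀ r : ℝ, 0 ≤ r → tailF u r ≤ tailF v r

/-- Partial order modulo `m`: `F(r;u) ≤ F(r;v) + m` for all `r ≥ 0`. -/
def UleMod (u v : UEl) (m : ℝ) : Prop :=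
  ∀ r : ℝ, 0 ≤ r → tailF u r ≤ tailF v r + m

/-- The lower barrier `S^{(δ,−)}_{kδ}(u)`. -/
def Sminus (j δ : ℝ) (u : UEl) : ℕ → UEl
  | 0 => u
  | k+1 => cutPaste j δ (heat δ (Sminus j δ u k))

/-- The upper barrier `S^{(δ,+)}_{kδ}(u)`. -/
def Splus (j δ : ℝ) (u : UEl) : ℕ → UEl
  | 0 => u
  | k+1 => heat δ (cutPaste j δ (Splus j δ u k))

/-- A nonnegative density in `L¹(ℝ₊) ∩ L^∞(ℝ₊)`. -/
def goodFn (u : ℝ → ℝ) : Prop :=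
  (∀ r, 0 ≤ u r) ∧ Integrable u (volume.restrict (Set.Ioi (0:ℝ))) ∧
    ∃ M : ℝ, ∀ r, u r ≤ M

/-- Mass-transport order on densities: `∫_r^∞ u ≤ ∫_r^∞ v` for all `r ≥ 0`. -/
def fnLe (u v : ℝ → ℝ) : Prop :=
  ∀ r : ℝ, 0 ≤ r → (∫ x in Set.Ioi r, u x) ≤ ∫ x in Set.Ioi r, v x

end

/-!
The tail of `G_t u` is an average of the tail of `u` against a probability measure on `ℝ₊`:
integrating the Neumann kernel by parts gives weight `∫_r^∞ G_t(x, 0) dx` to the origin and the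
Dirichlet kernel as density on `(0, ∞)`. Hence the heat flow preserves `F(·; u) ≤ F(·; v) + m` for
every shift `m`. Away from the origin the cut-and-paste operator acts on tails by `F ↦ (F - jδ)⁺`,
keeping the total mass, so `v ≤ K v + jδ`; this gives `K G X ≤ G K Y` whenever `X ≤ Y`, the middle
inequality. With the semigroup property, the outer ones follow by induction on the number of fine
steps: one cut of `j (τ + b)` at time `τ + b` leaves a smaller tail than a cut of `jτ` at time `τ`
followed by a cut of `jb` after a further time `b`, and dually for the upper barrier.
-/

open ProbabilityTheory Real

section HalfLineIntegrals

lemma integral_Ioi_comp_sub_right (f : ℝ → ℝ) (a c : ℝ) :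
    ∫ x in Ioi a, f (x - c) = ∫ x in Ioi (a - c), f x := by
  have h := (measurePreserving_sub_right volume c).setIntegral_preimage_emb
    (measurableEmbedding_subRight c) f (Ioi (a - c))
  rwa [preimage_sub_const_Ioi, sub_add_cancel] at h

lemma integral_Ioi_mul_add_comp_neg {φ h : ℝ → ℝ} (hφ : ∀ y, φ (-y) = φ y)
    (hint : Integrable fun y => φ y * h y) :
    ∫ y in Ioi 0, φ y * (h y + h (-y)) = ∫ y, φ y * h y := by
  have hrefl : ∫ y in Ioi 0, φ y * h (-y) = ∫ y in Iic 0, φ y * h y := by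
    simpa [hφ, neg_zero] using integral_comp_neg_Ioi 0 fun y => φ y * h y
  simp_rw [mul_add]
  rw [integral_add hint.integrableOn (hint.comp_neg.congr (by simp [hφ])).integrableOn, hrefl,
    add_comm, intervalIntegral.integral_Iic_add_Ioi hint.integrableOn hint.integrableOn]

lemma integrable_mul_of_continuous_of_le {μ : Measure ℝ} {φ h : ℝ → ℝ} (hφ : Continuous φ)
    (hφ0 : ∀ y, 0 ≤ φ y) {C : ℝ} (hφC : ∀ y, φ y ≤ C) (hh : Integrable h μ) :
    Integrable (fun y => φ y * h y) μ :=
  hh.bdd_mul hφ.aestronglyMeasurable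
    (ae_of_all _ fun y => by rw [Real.norm_of_nonneg (hφ0 y)]; exact hφC y)

lemma integrable_prod_mul_of_integral_le {α β : Type*} [MeasurableSpace α] [MeasurableSpace β]
    {μ : Measure α} {ν : Measure β} [SFinite μ] [SFinite ν] {k : α → β → ℝ} {ρ : β → ℝ} {C : ℝ}
    (hk : AEStronglyMeasurable (Function.uncurry k) (μ.prod ν)) (hk0 : ∀ x y, 0 ≤ k x y)
    (hkint : ∀ y, Integrable (k · y) μ) (hkC : ∀ y, ∫ x, k x y ∂μ ≤ C) (hρ : Integrable ρ ν) :
    Integrable (fun p : α × β => k p.1 p.2 * ρ p.2) (μ.prod ν) := by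
  rw [integrable_prod_iff' (f := fun p : α × β => k p.1 p.2 * ρ p.2) (hk.mul hρ.1.comp_snd)]
  refine ⟨ae_of_all _ fun y => (hkint y).mul_const (ρ y), ?_⟩
  have hnorm : (fun y => ∫ x, ‖k x y * ρ y‖ ∂μ) = fun y => (∫ x, k x y ∂μ) * ‖ρ y‖ := by
    funext y
    simp_rw [norm_mul, Real.norm_of_nonneg (hk0 _ _)]
    exact integral_mul_const _ _
  rw [hnorm]
  refine hρ.norm.bdd_mul (c := C) hk.prod_swap.integral_prod_right' (ae_of_all _ fun y => ?_)
  rw [Real.norm_of_nonneg (integral_nonneg fun x => hk0 x y)]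
  exact hkC y

variable {f g : ℝ → ℝ} {a : ℝ}

lemma integral_Ioi_integral_Ioc_mul (hf : IntegrableOn f (Ioi a)) (hg : IntegrableOn g (Ioi a)) :
    ∫ x in Ioi a, (∫ s in Ioc a x, g s) * f x = ∫ s in Ioi a, g s * ∫ x in Ioi s, f x := by
  set Q : ℝ × ℝ → ℝ := {p | p.2 ≤ p.1}.indicator fun p => f p.1 * g p.2
  have hQ : Integrable (Function.uncurry fun x s => Q (x, s))
      ((volume.restrict (Ioi a)).prod (volume.restrict (Ioi a))) :=
    (hf.mul_prod hg).indicator (measurableSet_le measurable_snd measurable_fst)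
  have hx : ∀ x, ∫ s in Ioi a, Q (x, s) = (∫ s in Ioc a x, g s) * f x := fun x => by
    have : (fun s => Q (x, s)) = (Iic x).indicator fun s => f x * g s := by
      ext s; simp [Q, indicator_apply]
    rw [this, setIntegral_indicator measurableSet_Iic, Ioi_inter_Iic, integral_const_mul,
      mul_comm]
  have hs : ∀ s ∈ Ioi a, ∫ x in Ioi a, Q (x, s) = g s * ∫ x in Ioi s, f x := fun s hs => by
    have : (fun x => Q (x, s)) = (Ici s).indicator fun x => g s * f x := by
      ext x; simp [Q, indicator_apply, mul_comm]
    rw [this, setIntegral_indicator measurableSet_Ici,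
      inter_eq_self_of_subset_right (Ici_subset_Ioi.2 hs), integral_const_mul,
      integral_Ici_eq_integral_Ioi]
  simp_rw [← hx]
  rw [integral_integral_swap hQ]
  exact setIntegral_congr_fun measurableSet_Ioi hs

lemma integrableOn_mul_integral_Ioi (hg : IntegrableOn g (Ioi a)) (hf : IntegrableOn f (Ioi a)) :
    IntegrableOn (fun s => g s * ∫ x in Ioi s, f x) (Ioi a) := by
  have hmeas : AEStronglyMeasurable (fun s => ∫ x in Ioi s, f x) (volume.restrict (Ioi a)) :=
    (hf.continuousOn_Ici_primitive_Ioi.mono Ioi_subset_Ici_self).aestronglyMeasurable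
      measurableSet_Ioi
  refine hg.mul_bdd (c := ∫ x in Ioi a, ‖f x‖) hmeas ?_
  filter_upwards [ae_restrict_mem measurableSet_Ioi] with s hs
  refine (norm_integral_le_integral_norm _).trans (setIntegral_mono_set hf.norm ?_ ?_)
  · exact ae_of_all _ fun x => norm_nonneg _
  · exact ae_of_all _ (Ioi_subset_Ioi (le_of_lt hs))

lemma csInf_tail_level_mem (hf : IntegrableOn f (Ioi 0)) {a : ℝ} (ha : 0 < a)
    (haf : a ≤ ∫ x in Ioi 0, f x) :
    sInf {r | 0 ≤ r ∧ ∫ x in Ioi r, f x = a} ∈ {r | 0 ≤ r ∧ ∫ x in Ioi r, f x = a} := by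
  have hcont := hf.continuousOn_Ici_primitive_Ioi
  obtain ⟨M, hMa, hM0⟩ := (((tendsto_integral_Ioi_zero (f := f) (μ := volume) tendsto_id).eventually
    (gt_mem_nhds ha)).and (eventually_ge_atTop 0)).exists
  obtain ⟨r, hr, hra⟩ :=
    intermediate_value_Icc' hM0 (hcont.mono Icc_subset_Ici_self) ⟨hMa.le, haf⟩
  exact (hcont.preimage_isClosed_of_isClosed isClosed_Ici isClosed_singleton).csInf_mem
    ⟨r, hr.1, hra⟩ ⟨0, fun r hr => hr.1⟩

end HalfLineIntegrals

/-- The Gaussian density of variance `t`; like `Gneum`, it vanishes identically for `t ≤ 0`. -/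
noncomputable def heatKernel (t x : ℝ) : ℝ := gaussianPDFReal 0 t.toNNReal x

lemma heatKernel_eq (t x : ℝ) :
    heatKernel t x = (√(2 * π * t))⁻¹ * Real.exp (-x ^ 2 / (2 * t)) := by
  rcases le_or_gt t 0 with ht | ht
  · rw [heatKernel, Real.toNNReal_eq_zero.2 ht, gaussianPDFReal_zero_var,
      Real.sqrt_eq_zero_of_nonpos (by nlinarith [Real.pi_pos])]
    simp
  · simp [heatKernel, gaussianPDFReal_def, Real.coe_toNNReal t ht.le]

section HeatKernel

variable {s t : ℝ}

lemma heatKernel_nonneg (t x : ℝ) : 0 ≤ heatKernel t x := gaussianPDFReal_nonneg _ _ _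

lemma heatKernel_neg (t x : ℝ) : heatKernel t (-x) = heatKernel t x := by
  simp [heatKernel_eq]

@[fun_prop]
lemma continuous_heatKernel (t : ℝ) : Continuous (heatKernel t) := by
  simp_rw [funext (heatKernel_eq t)]
  fun_prop

lemma integrable_heatKernel (t : ℝ) : Integrable (heatKernel t) := integrable_gaussianPDFReal _ _

lemma integral_heatKernel (ht : 0 < t) : ∫ x, heatKernel t x = 1 :=
  integral_gaussianPDFReal_eq_one 0 (by simpa using ht)

lemma heatKernel_le (ht : 0 < t) (x : ℝ) : heatKernel t x ≤ (√(2 * π * t))⁻¹ := by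
  rw [heatKernel_eq]
  refine mul_le_of_le_one_right (by positivity) (Real.exp_le_one_iff.2 ?_)
  exact div_nonpos_of_nonpos_of_nonneg (neg_nonpos.2 (sq_nonneg x)) (by positivity)

lemma heatKernel_le_of_abs_le (ht : 0 < t) {x y : ℝ} (h : |x| ≤ |y|) :
    heatKernel t y ≤ heatKernel t x := by
  simp only [heatKernel_eq]
  gcongr _ * Real.exp (-?_ / _)
  exact sq_le_sq.2 h

/-- Completing the square in the exponent. -/
lemma heatKernel_mul_heatKernel (hs : 0 < s) (ht : 0 < t) (a y : ℝ) :
    heatKernel s (a - y) * heatKernel t y =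
      heatKernel (s + t) a * heatKernel (s * t / (s + t)) (y - t * a / (s + t)) := by
  have hst : 0 < s + t := by positivity
  simp only [heatKernel_eq]
  rw [mul_mul_mul_comm, mul_mul_mul_comm _ (Real.exp _), ← mul_inv, ← mul_inv,
    ← Real.sqrt_mul (by positivity), ← Real.sqrt_mul (by positivity), ← Real.exp_add,
    ← Real.exp_add]
  congr 1
  · congr 2
    field_simp
  · congr 1
    field_simp
    ring

lemma integral_heatKernel_mul_heatKernel (hs : 0 < s) (ht : 0 < t) (a b : ℝ) :
    ∫ y, heatKernel s (a - y) * heatKernel t (y - b) = heatKernel (s + t) (a - b) := by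
  have hτ : 0 < s * t / (s + t) := by positivity
  rw [← integral_add_right_eq_self _ b]
  simp_rw [add_sub_cancel_right, show ∀ y, a - (y + b) = a - b - y from fun y => by ring,
    heatKernel_mul_heatKernel hs ht, integral_const_mul, integral_sub_right_eq_self,
    integral_heatKernel hτ, mul_one]

end HeatKernel

noncomputable def gaussTail (t a : ℝ) : ℝ := ∫ x in Ioi a, heatKernel t x

lemma gaussTail_add_gaussTail_neg {t : ℝ} (ht : 0 < t) (a : ℝ) :
    gaussTail t a + gaussTail t (-a) = 1 := by
  have hrefl : gaussTail t (-a) = ∫ x in Iic a, heatKernel t x := by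
    simpa [gaussTail, heatKernel_neg] using integral_comp_neg_Ioi (-a) (heatKernel t)
  rw [hrefl, add_comm, gaussTail, intervalIntegral.integral_Iic_add_Ioi
    (integrable_heatKernel t).integrableOn (integrable_heatKernel t).integrableOn,
    integral_heatKernel ht]

lemma integral_Ioi_heatKernel_sub (t a c : ℝ) :
    ∫ x in Ioi a, heatKernel t (x - c) = gaussTail t (a - c) :=
  integral_Ioi_comp_sub_right _ a c

lemma Gneum_eq_heatKernel (t x y : ℝ) :
    Gneum t x y = heatKernel t (x - y) + heatKernel t (x + y) := by
  simp only [Gneum, heatKernel_eq]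
  ring

section Gneum

variable {s t : ℝ}

lemma Gneum_nonneg (t x y : ℝ) : 0 ≤ Gneum t x y := by
  rw [Gneum_eq_heatKernel]
  exact add_nonneg (heatKernel_nonneg _ _) (heatKernel_nonneg _ _)

lemma Gneum_neg_right (t x y : ℝ) : Gneum t x (-y) = Gneum t x y := by
  rw [Gneum_eq_heatKernel, Gneum_eq_heatKernel, sub_neg_eq_add, ← sub_eq_add_neg, add_comm]

lemma continuous_Gneum (t : ℝ) : Continuous fun p : ℝ × ℝ => Gneum t p.1 p.2 := by
  simp_rw [Gneum_eq_heatKernel]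
  fun_prop

lemma Gneum_le (ht : 0 < t) (x y : ℝ) : Gneum t x y ≤ 2 * (√(2 * π * t))⁻¹ := by
  rw [Gneum_eq_heatKernel, two_mul]
  exact add_le_add (heatKernel_le ht _) (heatKernel_le ht _)

lemma integrable_Gneum_left (t y : ℝ) : Integrable fun x => Gneum t x y := by
  simp_rw [Gneum_eq_heatKernel, ← sub_neg_eq_add _ y]
  have h := (integrable_heatKernel t).comp_sub_right
  exact (h y).add (h _)

lemma integral_Gneum_left (ht : 0 < t) (y : ℝ) : ∫ x, Gneum t x y = 2 := by
  simp_rw [Gneum_eq_heatKernel, ← sub_neg_eq_add _ y]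
  rw [integral_add ((integrable_heatKernel t).comp_sub_right y)
    ((integrable_heatKernel t).comp_sub_right _), integral_sub_right_eq_self,
    integral_sub_right_eq_self, integral_heatKernel ht, one_add_one_eq_two]

lemma integrable_Gneum_mul (ht : 0 < t) (x : ℝ) {μ : Measure ℝ} {h : ℝ → ℝ} (hh : Integrable h μ) :
    Integrable (fun y => Gneum t x y * h y) μ :=
  integrable_mul_of_continuous_of_le (by simp only [funext (Gneum_eq_heatKernel t x)]; fun_prop)
    (Gneum_nonneg t x) (Gneum_le ht x) hh

/-- Chapman–Kolmogorov: unfold the half-line integral to a whole-line one by the method of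
images, then use the Gaussian convolution identity. -/
lemma integral_Gneum_mul_Gneum (hs : 0 < s) (ht : 0 < t) (x z : ℝ) :
    ∫ y in Ioi 0, Gneum s x y * Gneum t y z = Gneum (s + t) x z := by
  have himage : ∀ y, Gneum t y z = heatKernel t (y - z) + heatKernel t (-y - z) := fun y => by
    rw [Gneum_eq_heatKernel, ← heatKernel_neg t (y + z), neg_add', sub_eq_add_neg]
  have hmirror : ∀ y, heatKernel s (x + y) = heatKernel s (-x - y) := fun y => by
    rw [← heatKernel_neg, neg_add']
  have hint := (integrable_heatKernel t).comp_sub_right z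
  have hpiece : ∀ c, Integrable fun y => heatKernel s (c - y) * heatKernel t (y - z) := fun c =>
    integrable_mul_of_continuous_of_le (by fun_prop) (fun _ => heatKernel_nonneg _ _)
      (fun _ => heatKernel_le hs _) hint
  simp_rw [himage]
  rw [integral_Ioi_mul_add_comp_neg (Gneum_neg_right s x) (integrable_Gneum_mul hs x hint)]
  simp_rw [Gneum_eq_heatKernel, add_mul, hmirror]
  rw [integral_add (hpiece x) (hpiece (-x)), integral_heatKernel_mul_heatKernel hs ht,
    integral_heatKernel_mul_heatKernel hs ht, ← neg_add', heatKernel_neg]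

end Gneum

noncomputable def neumTail (t r y : ℝ) : ℝ := ∫ x in Ioi r, Gneum t x y

/-- `∂_y neumTail t r y = neumWeight t r y`, the Dirichlet heat kernel. -/
noncomputable def neumWeight (t r s : ℝ) : ℝ := heatKernel t (r - s) - heatKernel t (r + s)

section NeumTail

variable {t : ℝ}

lemma neumTail_eq (t r y : ℝ) : neumTail t r y = gaussTail t (r - y) + gaussTail t (r + y) := by
  have h := (integrable_heatKernel t).comp_sub_right
  simp_rw [neumTail, Gneum_eq_heatKernel, ← sub_neg_eq_add _ y]
  rw [integral_add (h y).integrableOn (h _).integrableOn, integral_Ioi_heatKernel_sub,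
    integral_Ioi_heatKernel_sub]

lemma neumTail_zero_left (ht : 0 < t) (y : ℝ) : neumTail t 0 y = 1 := by
  rw [neumTail_eq, zero_sub, zero_add, add_comm, gaussTail_add_gaussTail_neg ht]

lemma neumTail_le_two (ht : 0 < t) (r y : ℝ) : neumTail t r y ≤ 2 :=
  (setIntegral_le_integral (integrable_Gneum_left t y)
    (ae_of_all _ fun x => Gneum_nonneg t x y)).trans (integral_Gneum_left ht y).le

lemma neumWeight_nonneg (ht : 0 < t) {r s : ℝ} (hr : 0 ≤ r) (hs : 0 ≤ s) : 0 ≤ neumWeight t r s :=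
  sub_nonneg.2 <| heatKernel_le_of_abs_le ht <| by
    rw [abs_of_nonneg (add_nonneg hr hs)]
    exact abs_sub_le_iff.2 ⟨by linarith, by linarith⟩

lemma integrable_neumWeight (t r : ℝ) : Integrable (neumWeight t r) := by
  have h := integrable_heatKernel t
  exact (h.comp_sub_left r).sub ((h.comp_add_right r).congr (ae_of_all _ fun s => by
    simp only [add_comm]))

lemma neumTail_add_integral_neumWeight (ht : 0 < t) (r y : ℝ) :
    neumTail t r y + ∫ s in Ioi y, neumWeight t r s = 1 := by
  have hflip : ∀ s, heatKernel t (r - s) = heatKernel t (s - r) := fun s => by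
    rw [← heatKernel_neg, neg_sub]
  have hshift : ∀ s, heatKernel t (r + s) = heatKernel t (s - -r) := fun s => by
    rw [sub_neg_eq_add, add_comm]
  have h := (integrable_heatKernel t).comp_sub_right
  simp_rw [neumWeight, hflip, hshift]
  rw [integral_sub (h r).integrableOn (h _).integrableOn, integral_Ioi_heatKernel_sub,
    integral_Ioi_heatKernel_sub, neumTail_eq, sub_neg_eq_add, ← neg_sub r y,
    add_comm y r]
  linarith [gaussTail_add_gaussTail_neg ht (r - y)]

lemma neumTail_eq_add_integral_Ioc (ht : 0 < t) (r : ℝ) {y : ℝ} (hy : 0 ≤ y) :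
    neumTail t r y = neumTail t r 0 + ∫ s in Ioc 0 y, neumWeight t r s := by
  have h0 := neumTail_add_integral_neumWeight ht r 0
  have hy' := neumTail_add_integral_neumWeight ht r y
  have hsplit := intervalIntegral.integral_Ioi_sub_Ioi (integrable_neumWeight t r).integrableOn hy
  rw [intervalIntegral.integral_of_le hy] at hsplit
  linarith

end NeumTail

/-- `𝓤` without the `L^∞` bound. -/
structure IsFiniteNonneg (u : UEl) : Prop where
  atom_nonneg : 0 ≤ u.1
  density_nonneg : ∀ r, 0 ≤ u.2 r
  integrableOn : IntegrableOn u.2 (Ioi 0)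

section Tail

variable {u : UEl} {r : ℝ}

lemma tailF_zero (u : UEl) : tailF u 0 = u.1 + ∫ x in Ioi 0, u.2 x := by
  simp [tailF]

lemma tailF_of_ne_zero (hr : r ≠ 0) : tailF u r = ∫ x in Ioi r, u.2 x := by
  simp [tailF, hr]

lemma tailF_of_fst_eq_zero (hu : u.1 = 0) (r : ℝ) : tailF u r = ∫ x in Ioi r, u.2 x := by
  simp [tailF, hu]

lemma IsFiniteNonneg.tailF_nonneg (hu : IsFiniteNonneg u) (r : ℝ) : 0 ≤ tailF u r :=
  add_nonneg (by split_ifs <;> simp [hu.atom_nonneg])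
    (setIntegral_nonneg measurableSet_Ioi fun x _ => hu.density_nonneg x)

end Tail

section Order

variable {u v w : UEl} {m m' : ℝ}

lemma Ule.refl (u : UEl) : Ule u u := fun _ _ => le_rfl

lemma Ule.trans (h₁ : Ule u v) (h₂ : Ule v w) : Ule u w := fun r hr => (h₁ r hr).trans (h₂ r hr)

lemma Ule.uleMod (h : Ule u v) : UleMod u v 0 := fun r hr => by simpa using h r hr

lemma UleMod.ule (h : UleMod u v 0) : Ule u v := fun r hr => by simpa using h r hr

lemma UleMod.trans (h₁ : UleMod u v m) (h₂ : UleMod v w m') : UleMod u w (m + m') :=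
  fun r hr => by linarith [h₁ r hr, h₂ r hr]

end Order

section Heat

variable {s t : ℝ} {u v : UEl}

lemma integrable_prod_Gneum_mul (ht : 0 < t) {ρ : ℝ → ℝ} (hρ : IntegrableOn ρ (Ioi 0)) (r : ℝ) :
    Integrable (fun p : ℝ × ℝ => Gneum t p.1 p.2 * ρ p.2)
      ((volume.restrict (Ioi r)).prod (volume.restrict (Ioi 0))) :=
  integrable_prod_mul_of_integral_le (continuous_Gneum t).aestronglyMeasurable (Gneum_nonneg t)
    (fun y => (integrable_Gneum_left t y).integrableOn) (neumTail_le_two ht r) hρ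

lemma tailF_heat (ht : 0 < t) (hu : IntegrableOn u.2 (Ioi 0)) (r : ℝ) :
    tailF (heat t u) r = u.1 * neumTail t r 0 + ∫ y in Ioi 0, neumTail t r y * u.2 y := by
  have hprod := integrable_prod_Gneum_mul ht hu r
  rw [tailF_of_fst_eq_zero rfl, heat, integral_add
    ((integrable_Gneum_left t 0).const_mul _).integrableOn hprod.integral_prod_left,
    integral_const_mul, integral_integral_swap hprod]
  simp_rw [integral_mul_const]
  rfl

lemma IsFiniteNonneg.heat (ht : 0 < t) (hu : IsFiniteNonneg u) : IsFiniteNonneg (heat t u) where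
  atom_nonneg := le_rfl
  density_nonneg _ := add_nonneg (mul_nonneg hu.atom_nonneg (Gneum_nonneg _ _ _))
    (integral_nonneg fun y => mul_nonneg (Gneum_nonneg _ _ _) (hu.density_nonneg y))
  integrableOn := ((integrable_Gneum_left t 0).const_mul _).integrableOn.add
    (integrable_prod_Gneum_mul ht hu.integrableOn 0).integral_prod_left

lemma tailF_heat_zero (ht : 0 < t) (hu : IntegrableOn u.2 (Ioi 0)) :
    tailF (heat t u) 0 = tailF u 0 := by
  simp [tailF_heat ht hu, neumTail_zero_left ht, tailF_zero]

lemma integrableOn_neumWeight_mul_tailF (hu : IntegrableOn u.2 (Ioi 0)) (t r : ℝ) :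
    IntegrableOn (fun s => neumWeight t r s * tailF u s) (Ioi 0) :=
  (integrableOn_mul_integral_Ioi (integrable_neumWeight t r).integrableOn hu).congr_fun
    (fun s hs => by rw [tailF_of_ne_zero (ne_of_gt hs)]) measurableSet_Ioi

/-- Integration by parts in `y`; the weights form a probability measure on `ℝ₊` by
`neumTail_add_integral_neumWeight`. -/
lemma tailF_heat_eq_weighted (ht : 0 < t) (hu : IntegrableOn u.2 (Ioi 0)) (r : ℝ) :
    tailF (heat t u) r =
      tailF u 0 * neumTail t r 0 + ∫ s in Ioi 0, neumWeight t r s * tailF u s := by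
  have hK : IntegrableOn (fun y => neumTail t r y * u.2 y) (Ioi 0) := by
    have h := (integrable_prod_Gneum_mul ht hu r).integral_prod_right
    simp only [integral_mul_const] at h
    exact h
  have hparts : ∫ s in Ioi 0, neumWeight t r s * tailF u s =
      (∫ y in Ioi 0, neumTail t r y * u.2 y) - neumTail t r 0 * ∫ y in Ioi 0, u.2 y := by
    rw [setIntegral_congr_fun measurableSet_Ioi fun s hs => by rw [tailF_of_ne_zero (ne_of_gt hs)],
      ← integral_Ioi_integral_Ioc_mul hu (integrable_neumWeight t r).integrableOn,
      ← integral_const_mul, ← integral_sub hK (hu.const_mul _)]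
    refine setIntegral_congr_fun measurableSet_Ioi fun y hy => ?_
    rw [neumTail_eq_add_integral_Ioc ht r (le_of_lt hy)]
    ring
  rw [tailF_heat ht hu, hparts, tailF_zero]
  ring

lemma heat_uleMod (ht : 0 < t) (hu : IsFiniteNonneg u) (hv : IsFiniteNonneg v) {m : ℝ}
    (h : UleMod u v m) : UleMod (heat t u) (heat t v) m := by
  intro r hr
  have hw : ∀ s ∈ Ioi (0 : ℝ), 0 ≤ neumWeight t r s := fun s hs =>
    neumWeight_nonneg ht hr (le_of_lt hs)
  have hK0 : 0 ≤ neumTail t r 0 :=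
    setIntegral_nonneg measurableSet_Ioi fun x _ => Gneum_nonneg t x 0
  have hU := integrableOn_neumWeight_mul_tailF hu.integrableOn t r
  have hV := integrableOn_neumWeight_mul_tailF hv.integrableOn t r
  have hW := (integrable_neumWeight t r).integrableOn (s := Ioi 0)
  have hbody : ∫ s in Ioi 0, neumWeight t r s * tailF u s ≤
      (∫ s in Ioi 0, neumWeight t r s * tailF v s) + m * ∫ s in Ioi 0, neumWeight t r s := by
    rw [← integral_const_mul, ← integral_add hV (hW.const_mul m)]
    refine setIntegral_mono_on hU (hV.add (hW.const_mul m)) measurableSet_Ioi fun s hs => ?_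
    nlinarith [hw s hs, h s (le_of_lt hs)]
  have hatom : tailF u 0 * neumTail t r 0 ≤ (tailF v 0 + m) * neumTail t r 0 :=
    mul_le_mul_of_nonneg_right (h 0 le_rfl) hK0
  have htotal : m * neumTail t r 0 + m * ∫ s in Ioi 0, neumWeight t r s = m := by
    rw [← mul_add, neumTail_add_integral_neumWeight ht r 0, mul_one]
  rw [tailF_heat_eq_weighted ht hu.integrableOn, tailF_heat_eq_weighted ht hv.integrableOn]
  linarith

lemma heat_mono (ht : 0 < t) (hu : IsFiniteNonneg u) (hv : IsFiniteNonneg v) (h : Ule u v) :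
    Ule (heat t u) (heat t v) :=
  (heat_uleMod ht hu hv h.uleMod).ule

lemma heat_heat (hs : 0 < s) (ht : 0 < t) (hu : IntegrableOn u.2 (Ioi 0)) :
    heat s (heat t u) = heat (s + t) u := by
  refine Prod.ext rfl (funext fun x => ?_)
  have hρ := (integrable_prod_Gneum_mul ht hu 0).integral_prod_left
  have hkernel := integrable_prod_mul_of_integral_le (μ := volume.restrict (Ioi 0))
    (k := fun y r' => Gneum s x y * Gneum t y r')
    (Continuous.aestronglyMeasurable (by simp only [Gneum_eq_heatKernel]; fun_prop))
    (fun y r' => mul_nonneg (Gneum_nonneg _ _ _) (Gneum_nonneg _ _ _))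
    (fun r' => integrable_Gneum_mul hs x (integrable_Gneum_left t r').integrableOn)
    (fun r' => (integral_Gneum_mul_Gneum hs ht x r').trans_le (Gneum_le (add_pos hs ht) x r')) hu
  change 0 * Gneum s x 0 + ∫ y in Ioi 0, Gneum s x y *
      (u.1 * Gneum t y 0 + ∫ r' in Ioi 0, Gneum t y r' * u.2 r') = _
  simp_rw [mul_add]
  rw [zero_mul, zero_add, integral_add (integrable_Gneum_mul hs x
    ((integrable_Gneum_left t 0).const_mul u.1).integrableOn) (integrable_Gneum_mul hs x hρ)]
  congr 1
  · simp_rw [mul_left_comm _ u.1]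
    rw [integral_const_mul, integral_Gneum_mul_Gneum hs ht]
  · simp_rw [← integral_const_mul, ← mul_assoc]
    rw [integral_integral_swap hkernel]
    simp_rw [integral_mul_const, integral_Gneum_mul_Gneum hs ht]

end Heat

section CutPaste

variable {j b b' : ℝ} {u v w : UEl}

lemma IsFiniteNonneg.cutPaste (hu : IsFiniteNonneg u) (hjb : 0 ≤ j * b) :
    IsFiniteNonneg (cutPaste j b u) where
  atom_nonneg := hjb
  density_nonneg := indicator_nonneg fun x _ => hu.density_nonneg x
  integrableOn := hu.integrableOn.indicator measurableSet_Icc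

lemma Rdelta_nonneg_and_tailF_eq (hu : IsFiniteNonneg u) (hu0 : u.1 = 0) (hjb : 0 < j * b)
    (hb : j * b ≤ tailF u 0) : 0 ≤ Rdelta j b u ∧ tailF u (Rdelta j b u) = j * b := by
  simp only [Rdelta, tailF_of_fst_eq_zero hu0] at hb ⊢
  exact csInf_tail_level_mem hu.integrableOn hjb hb

lemma integral_Ioi_cutPaste (hu : IsFiniteNonneg u) (hu0 : u.1 = 0) (hjb : 0 < j * b)
    (hb : j * b ≤ tailF u 0) {r : ℝ} (hr : 0 ≤ r) :
    ∫ x in Ioi r, (cutPaste j b u).2 x = max (tailF u r - j * b) 0 := by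
  obtain ⟨hR0, hRb⟩ := Rdelta_nonneg_and_tailF_eq hu hu0 hjb hb
  set R := Rdelta j b u
  have hF := tailF_of_fst_eq_zero hu0
  have hanti : ∀ {x y}, 0 ≤ x → x ≤ y → tailF u y ≤ tailF u x := fun hx hxy => by
    rw [hF, hF]
    exact setIntegral_mono_set (hu.integrableOn.mono_set (Ioi_subset_Ioi hx))
      (ae_of_all _ fun z => hu.density_nonneg z) (ae_of_all _ (Ioi_subset_Ioi hxy))
  have hset : Ioi r ∩ Icc 0 R = Ioc r R := by
    ext x
    simp only [mem_inter_iff, mem_Ioi, mem_Icc, mem_Ioc]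
    exact ⟨fun h => ⟨h.1, h.2.2⟩, fun h => ⟨h.1, by linarith [h.1], h.2⟩⟩
  change ∫ x in Ioi r, (Icc 0 R).indicator u.2 x = _
  rw [setIntegral_indicator measurableSet_Icc, hset]
  rcases le_or_gt r R with hrR | hRr
  · have hsplit := intervalIntegral.integral_Ioi_sub_Ioi
      (hu.integrableOn.mono_set (Ioi_subset_Ioi hr)) hrR
    rw [intervalIntegral.integral_of_le hrR, ← hF, ← hF, hRb] at hsplit
    rw [max_eq_left (by linarith [hanti hr hrR]), hsplit]
  · rw [Ioc_eq_empty (not_lt.2 hRr.le), Measure.restrict_empty, integral_zero_measure,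
      max_eq_right (by linarith [hanti hR0 hRr.le])]

lemma tailF_cutPaste_zero (hu : IsFiniteNonneg u) (hu0 : u.1 = 0) (hjb : 0 < j * b)
    (hb : j * b ≤ tailF u 0) : tailF (cutPaste j b u) 0 = tailF u 0 := by
  rw [tailF_zero, integral_Ioi_cutPaste hu hu0 hjb hb le_rfl, max_eq_left (by linarith)]
  change j * b + (tailF u 0 - j * b) = _
  ring

lemma tailF_cutPaste_of_pos (hu : IsFiniteNonneg u) (hu0 : u.1 = 0) (hjb : 0 < j * b)
    (hb : j * b ≤ tailF u 0) {r : ℝ} (hr : 0 < r) :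
    tailF (cutPaste j b u) r = max (tailF u r - j * b) 0 := by
  rw [tailF_of_ne_zero hr.ne', integral_Ioi_cutPaste hu hu0 hjb hb hr.le]

lemma uleMod_cutPaste (hu : IsFiniteNonneg u) (hu0 : u.1 = 0) (hjb : 0 < j * b)
    (hb : j * b ≤ tailF u 0) : UleMod u (cutPaste j b u) (j * b) := by
  intro r hr
  rcases hr.eq_or_lt with rfl | hr
  · rw [tailF_cutPaste_zero hu hu0 hjb hb]
    linarith
  · rw [tailF_cutPaste_of_pos hu hu0 hjb hb hr]
    linarith [le_max_left (tailF u r - j * b) 0]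

lemma cutPaste_le_of_uleMod (hu : IsFiniteNonneg u) (hu0 : u.1 = 0) (hjb : 0 < j * b)
    (hb : j * b ≤ tailF u 0) (hw : IsFiniteNonneg w) (h : UleMod u w (j * b))
    (h0 : tailF u 0 ≤ tailF w 0) : Ule (cutPaste j b u) w := by
  intro r hr
  rcases hr.eq_or_lt with rfl | hr
  · rwa [tailF_cutPaste_zero hu hu0 hjb hb]
  · rw [tailF_cutPaste_of_pos hu hu0 hjb hb hr]
    exact max_le (by linarith [h r hr.le]) (hw.tailF_nonneg r)

lemma cutPaste_le_cutPaste_of_uleMod (hu : IsFiniteNonneg u) (hu0 : u.1 = 0)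
    (hv : IsFiniteNonneg v) (hv0 : v.1 = 0) (hjb : 0 < j * b) (hjb' : 0 < j * b')
    (hb : j * b ≤ tailF v 0) (hb' : j * b' ≤ tailF u 0) (h : UleMod u v (j * b' - j * b))
    (h0 : tailF u 0 ≤ tailF v 0) : Ule (cutPaste j b' u) (cutPaste j b v) := by
  have h' := h.trans (uleMod_cutPaste hv hv0 hjb hb)
  rw [sub_add_cancel] at h'
  exact cutPaste_le_of_uleMod hu hu0 hjb' hb' (hv.cutPaste hjb.le) h'
    (h0.trans_eq (tailF_cutPaste_zero hv hv0 hjb hb).symm)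

lemma cutPaste_mono (hu : IsFiniteNonneg u) (hu0 : u.1 = 0) (hv : IsFiniteNonneg v)
    (hv0 : v.1 = 0) (hjb : 0 < j * b) (hb : j * b ≤ tailF u 0) (h : Ule u v) :
    Ule (cutPaste j b u) (cutPaste j b v) :=
  cutPaste_le_cutPaste_of_uleMod hu hu0 hv hv0 hjb hjb (hb.trans (h 0 le_rfl)) hb
    (by simpa using h.uleMod) (h 0 le_rfl)

lemma cutPaste_uleMod_cutPaste (hu : IsFiniteNonneg u) (hu0 : u.1 = 0) (hjb : 0 < j * b)
    (hbb' : j * b ≤ j * b') (hb' : j * b' ≤ tailF u 0) :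
    UleMod (cutPaste j b u) (cutPaste j b' u) (j * b' - j * b) := by
  have hb := hbb'.trans hb'
  have hjb' := hjb.trans_le hbb'
  intro r hr
  rcases hr.eq_or_lt with rfl | hr
  · rw [tailF_cutPaste_zero hu hu0 hjb hb, tailF_cutPaste_zero hu hu0 hjb' hb']
    linarith
  · rw [tailF_cutPaste_of_pos hu hu0 hjb hb hr, tailF_cutPaste_of_pos hu hu0 hjb' hb' hr]
    exact max_le (by linarith [le_max_left (tailF u r - j * b') 0])
      (by linarith [le_max_right (tailF u r - j * b') 0])

end CutPaste

section Barriers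

variable {j b τ M : ℝ} {u A B X Y : UEl}

lemma Sminus_spec (hj : 0 < j) (hb : 0 < b) (hu : IsFiniteNonneg u) (hM : j * b ≤ tailF u 0)
    (n : ℕ) : IsFiniteNonneg (Sminus j b u n) ∧ tailF (Sminus j b u n) 0 = tailF u 0 := by
  induction n with
  | zero => exact ⟨hu, rfl⟩
  | succ n ih =>
    have hG := ih.1.heat hb
    have hGM := (tailF_heat_zero hb ih.1.integrableOn).trans ih.2
    exact ⟨hG.cutPaste (mul_pos hj hb).le,
      (tailF_cutPaste_zero hG rfl (mul_pos hj hb) (hM.trans_eq hGM.symm)).trans hGM⟩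

lemma Splus_spec (hj : 0 < j) (hb : 0 < b) (hu : IsFiniteNonneg u) (hu0 : u.1 = 0)
    (hM : j * b ≤ tailF u 0) (n : ℕ) :
    IsFiniteNonneg (Splus j b u n) ∧ (Splus j b u n).1 = 0 ∧
      tailF (Splus j b u n) 0 = tailF u 0 := by
  induction n with
  | zero => exact ⟨hu, hu0, rfl⟩
  | succ n ih =>
    obtain ⟨hY, hY0, hYM⟩ := ih
    have hK := hY.cutPaste (mul_pos hj hb).le
    exact ⟨hK.heat hb, rfl, (tailF_heat_zero hb hK.integrableOn).trans
      ((tailF_cutPaste_zero hY hY0 (mul_pos hj hb) (hM.trans_eq hYM.symm)).trans hYM)⟩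

lemma cutPaste_heat_le_heat_cutPaste (hj : 0 < j) (hb : 0 < b) (hX : IsFiniteNonneg X)
    (hY : IsFiniteNonneg Y) (hY0 : Y.1 = 0) (hXM : tailF X 0 = M) (hYM : tailF Y 0 = M)
    (hM : j * b ≤ M) (h : Ule X Y) : Ule (cutPaste j b (heat b X)) (heat b (cutPaste j b Y)) := by
  have hjb := mul_pos hj hb
  have hGX := hX.heat hb
  have hGXM := (tailF_heat_zero hb hX.integrableOn).trans hXM
  have hKY := hY.cutPaste hjb.le
  have hKYM := (tailF_cutPaste_zero hY hY0 hjb (hM.trans_eq hYM.symm)).trans hYM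
  refine cutPaste_le_of_uleMod hGX rfl hjb (hM.trans_eq hGXM.symm) (hKY.heat hb) ?_ ?_
  · simpa using heat_uleMod hb hX hKY
      (h.uleMod.trans (uleMod_cutPaste hY hY0 hjb (hM.trans_eq hYM.symm)))
  · rw [hGXM, (tailF_heat_zero hb hKY.integrableOn).trans hKYM]

lemma cutPaste_heat_add_le (hj : 0 < j) (hb : 0 < b) (hτ : 0 < τ) (hA : IsFiniteNonneg A)
    (hX : IsFiniteNonneg X) (hAM : tailF A 0 = M) (hXM : tailF X 0 = M) (hM : j * (τ + b) ≤ M)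
    (h : Ule (cutPaste j τ (heat τ A)) X) :
    Ule (cutPaste j (τ + b) (heat (τ + b) A)) (cutPaste j b (heat b X)) := by
  have hjb := mul_pos hj hb
  have hjτ := mul_pos hj hτ
  have hGA := hA.heat hτ
  have hGAM := (tailF_heat_zero hτ hA.integrableOn).trans hAM
  have hGGAM := (tailF_heat_zero hb hGA.integrableOn).trans hGAM
  have hGXM := (tailF_heat_zero hb hX.integrableOn).trans hXM
  have hmod : UleMod (heat τ A) X (j * τ) := by
    simpa using (uleMod_cutPaste hGA rfl hjτ (by nlinarith)).trans h.uleMod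
  have hsemi : heat (τ + b) A = heat b (heat τ A) := by
    rw [heat_heat hb hτ hA.integrableOn, add_comm]
  rw [hsemi]
  refine cutPaste_le_cutPaste_of_uleMod (hGA.heat hb) rfl (hX.heat hb) rfl hjb
    (mul_pos hj (add_pos hτ hb)) (by nlinarith) (by nlinarith) ?_ (by rw [hGGAM, hGXM])
  rw [show j * (τ + b) - j * b = j * τ by ring]
  exact heat_uleMod hb hGA hX hmod

lemma heat_cutPaste_le_heat_cutPaste_add (hj : 0 < j) (hb : 0 < b) (hτ : 0 < τ)
    (hB : IsFiniteNonneg B) (hB0 : B.1 = 0) (hY : IsFiniteNonneg Y) (hY0 : Y.1 = 0)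
    (hBM : tailF B 0 = M) (hYM : tailF Y 0 = M) (hM : j * (τ + b) ≤ M)
    (h : Ule Y (heat τ (cutPaste j τ B))) :
    Ule (heat b (cutPaste j b Y)) (heat (τ + b) (cutPaste j (τ + b) B)) := by
  have hjb := mul_pos hj hb
  have hjτ := mul_pos hj hτ
  have hKB := hB.cutPaste hjτ.le
  have hKB' := hB.cutPaste (mul_pos hj (add_pos hτ hb)).le
  have hZ := hKB.heat hτ
  have hZM := (tailF_heat_zero hτ hKB.integrableOn).trans
    ((tailF_cutPaste_zero hB hB0 hjτ (by nlinarith)).trans hBM)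
  have hZ'M := (tailF_heat_zero hτ hKB'.integrableOn).trans
    ((tailF_cutPaste_zero hB hB0 (mul_pos hj (add_pos hτ hb)) (by linarith)).trans hBM)
  have hmod : UleMod (heat τ (cutPaste j τ B)) (heat τ (cutPaste j (τ + b) B)) (j * b) := by
    have h' := heat_uleMod hτ hKB hKB'
      (cutPaste_uleMod_cutPaste hB hB0 hjτ (by nlinarith) (hM.trans_eq hBM.symm))
    rwa [show j * (τ + b) - j * τ = j * b by ring] at h'
  have hsemi : heat (τ + b) (cutPaste j (τ + b) B) =
      heat b (heat τ (cutPaste j (τ + b) B)) := by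
    rw [heat_heat hb hτ hKB'.integrableOn, add_comm]
  rw [hsemi]
  refine heat_mono hb (hY.cutPaste hjb.le) (hKB'.heat hτ) ?_
  exact (cutPaste_mono hY hY0 hZ rfl hjb (by nlinarith) h).trans
    (cutPaste_le_of_uleMod hZ rfl hjb (by nlinarith) (hKB'.heat hτ) hmod (by rw [hZM, hZ'M]))

lemma Sminus_le_Splus (hj : 0 < j) (hb : 0 < b) (hu : IsFiniteNonneg u) (hu0 : u.1 = 0)
    (hM : j * b ≤ tailF u 0) (n : ℕ) : Ule (Sminus j b u n) (Splus j b u n) := by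
  induction n with
  | zero => exact Ule.refl u
  | succ n ih =>
    obtain ⟨hX, hXM⟩ := Sminus_spec hj hb hu hM n
    obtain ⟨hY, hY0, hYM⟩ := Splus_spec hj hb hu hu0 hM n
    exact cutPaste_heat_le_heat_cutPaste hj hb hX hY hY0 hXM hYM hM ih

lemma cutPaste_heat_le_Sminus_add (hj : 0 < j) (hb : 0 < b) (hu : IsFiniteNonneg u)
    (hA : IsFiniteNonneg A) (hAM : tailF A 0 = tailF u 0) {n : ℕ} (h : Ule A (Sminus j b u n))
    (m : ℕ) (hM : j * ((m + 1) * b) ≤ tailF u 0) :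
    Ule (cutPaste j ((m + 1) * b) (heat ((m + 1) * b) A)) (Sminus j b u (n + (m + 1))) := by
  have hMb : j * b ≤ tailF u 0 := (mul_le_mul_of_nonneg_left
    (le_mul_of_one_le_left hb.le (le_add_of_nonneg_left m.cast_nonneg)) hj.le).trans hM
  induction m with
  | zero =>
    simp only [Nat.cast_zero, zero_add, one_mul] at hM ⊢
    obtain ⟨hX, -⟩ := Sminus_spec hj hb hu hMb n
    exact cutPaste_mono (hA.heat hb) rfl (hX.heat hb) rfl (mul_pos hj hb)
      (hM.trans_eq ((tailF_heat_zero hb hA.integrableOn).trans hAM).symm) (heat_mono hb hA hX h)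
  | succ m ih =>
    rw [show ((m + 1 : ℕ) + 1 : ℝ) * b = (m + 1) * b + b by push_cast; ring] at hM ⊢
    obtain ⟨hX', hX'M⟩ := Sminus_spec hj hb hu hMb (n + (m + 1))
    exact cutPaste_heat_add_le hj hb (by positivity) hA hX' hAM hX'M hM
      (ih (by nlinarith))

lemma Splus_add_le_heat_cutPaste (hj : 0 < j) (hb : 0 < b) (hu : IsFiniteNonneg u)
    (hu0 : u.1 = 0) (hB : IsFiniteNonneg B) (hB0 : B.1 = 0) (hBM : tailF B 0 = tailF u 0)
    {n : ℕ} (h : Ule (Splus j b u n) B) (m : ℕ) (hM : j * ((m + 1) * b) ≤ tailF u 0) :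
    Ule (Splus j b u (n + (m + 1))) (heat ((m + 1) * b) (cutPaste j ((m + 1) * b) B)) := by
  have hMb : j * b ≤ tailF u 0 := (mul_le_mul_of_nonneg_left
    (le_mul_of_one_le_left hb.le (le_add_of_nonneg_left m.cast_nonneg)) hj.le).trans hM
  induction m with
  | zero =>
    simp only [Nat.cast_zero, zero_add, one_mul] at hM ⊢
    obtain ⟨hY, hY0, hYM⟩ := Splus_spec hj hb hu hu0 hMb n
    exact heat_mono hb (hY.cutPaste (mul_pos hj hb).le) (hB.cutPaste (mul_pos hj hb).le)
      (cutPaste_mono hY hY0 hB hB0 (mul_pos hj hb) (hM.trans_eq hYM.symm) h)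
  | succ m ih =>
    rw [show ((m + 1 : ℕ) + 1 : ℝ) * b = (m + 1) * b + b by push_cast; ring] at hM ⊢
    obtain ⟨hY, hY0, hYM⟩ := Splus_spec hj hb hu hu0 hMb (n + (m + 1))
    exact heat_cutPaste_le_heat_cutPaste_add hj hb (by positivity) hB hB0 hY hY0 hBM hYM hM
      (ih (by nlinarith))

lemma Sminus_le_Sminus_div (hj : 0 < j) (hb : 0 < b) (hu : IsFiniteNonneg u)
    (hM : j * b ≤ tailF u 0) {ℓ : ℕ} (hℓ : 0 < ℓ) (k : ℕ) :
    Ule (Sminus j b u k) (Sminus j (b / ℓ) u (k * ℓ)) := by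
  obtain ⟨m, rfl⟩ := Nat.exists_eq_add_one_of_ne_zero hℓ.ne'
  have hstep : ((m : ℝ) + 1) * (b / ((m + 1 : ℕ) : ℝ)) = b := by
    push_cast
    field_simp
  induction k with
  | zero => rw [Nat.zero_mul]; exact Ule.refl u
  | succ k ih =>
    obtain ⟨hA, hAM⟩ := Sminus_spec hj hb hu hM k
    have h := cutPaste_heat_le_Sminus_add hj (by positivity) hu hA hAM ih m (by rwa [hstep])
    rwa [hstep, show k * (m + 1) + (m + 1) = (k + 1) * (m + 1) by ring] at h

lemma Splus_div_le_Splus (hj : 0 < j) (hb : 0 < b) (hu : IsFiniteNonneg u) (hu0 : u.1 = 0)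
    (hM : j * b ≤ tailF u 0) {ℓ : ℕ} (hℓ : 0 < ℓ) (k : ℕ) :
    Ule (Splus j (b / ℓ) u (k * ℓ)) (Splus j b u k) := by
  obtain ⟨m, rfl⟩ := Nat.exists_eq_add_one_of_ne_zero hℓ.ne'
  have hstep : ((m : ℝ) + 1) * (b / ((m + 1 : ℕ) : ℝ)) = b := by
    push_cast
    field_simp
  induction k with
  | zero => rw [Nat.zero_mul]; exact Ule.refl u
  | succ k ih =>
    obtain ⟨hB, hB0, hBM⟩ := Splus_spec hj hb hu hu0 hM k
    have h := Splus_add_le_heat_cutPaste hj (by positivity) hu hu0 hB hB0 hBM ih m (by rwa [hstep])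
    rwa [hstep, show k * (m + 1) + (m + 1) = (k + 1) * (m + 1) by ring] at h

end Barriers

/-- nesting of the barriers under refinement of the time step
`δ' = δ/ℓ`; the barriers with step `δ'` at time `kδ` are evaluated after `kℓ` steps. -/
theorem barriers_nesting (j δ : ℝ) (hj : 0 < j) (hδ : 0 < δ)
    (u : ℝ → ℝ) (hu : goodFn u)
    (hju : j * δ < ∫ x in Set.Ioi (0:ℝ), u x)
    (ℓ : ℕ) (hℓ : 0 < ℓ) :
    ∀ k : ℕ,
      Ule (Sminus j δ ((0:ℝ), u) k) (Sminus j (δ / ℓ) ((0:ℝ), u) (k * ℓ)) ∧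
      Ule (Sminus j (δ / ℓ) ((0:ℝ), u) (k * ℓ)) (Splus j (δ / ℓ) ((0:ℝ), u) (k * ℓ)) ∧
      Ule (Splus j (δ / ℓ) ((0:ℝ), u) (k * ℓ)) (Splus j δ ((0:ℝ), u) k) := by
  intro k
  have hu' : IsFiniteNonneg ((0 : ℝ), u) := ⟨le_rfl, hu.1, hu.2.1⟩
  have hM : j * δ ≤ tailF ((0 : ℝ), u) 0 := by
    rw [tailF_zero, zero_add]
    exact hju.le
  have hM' : j * (δ / ℓ) ≤ tailF ((0 : ℝ), u) 0 :=
    (mul_le_mul_of_nonneg_left (div_le_self hδ.le (Nat.one_le_cast.2 hℓ)) hj.le).trans hM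
  exact ⟨Sminus_le_Sminus_div hj hδ hu' hM hℓ k,
    Sminus_le_Splus hj (by positivity) hu' rfl hM' (k * ℓ),
    Splus_div_le_Splus hj hδ hu' rfl hM hℓ k⟩
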